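/- Factorization of the hook product h↓_Λ in the stable sector (equation (C.10)). Let λ and μ be partitions and let m be an integer with m ≥ |λ| + |μ|. Set Λ* = (λ + δ^m) ∪ μ and Λ⊛ = (λ + δ^{m+1}) ∪ μ. Say a cell (i,j) of Λ* (i.e. 1 ≤ j ≤ Λ*_i) is bosonic if it is NOT the case that both Λ⊛_i = Λ*_i + 1 and (Λ⊛)'_j = (Λ*)'_j + 1. Then the following identity holds in the polynomial ring ℤ[q,t]: ∏_{(i,j) bosonic} (1 − q^{Λ⊛_i − j} t^{(Λ*)'_j − i + 1}) = ∏_{(i,j) ∈ λ} (1 − q^{λ_i − j} (qt)^{λ'_j − i + 1}) · ∏_{(i,j) ∈ μ} (1 − (qt)^{μ_i − j} t^{μ'_j − i + 1}); in other words, h↓_Λ(q,t) = c_λ(q,qt) c_μ(qt,t). -/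

import Mathlib

/-! Since `m ≥ |λ| + |μ|`, the parts `λᵢ + m - 1 - i` of `λ + δᵐ` are distinct, and those with
`i < ℓ(λ)` exceed every part of `μ`. Hence `Λ*` consists of the `λ`-rows `λᵢ + m - 1 - i`, the
rows `μₚ` placed at index `m - μₚ + p`, and the remaining rows of the staircase; passing to `Λ⊛`
lengthens every `λ`-row and staircase row by one and leaves the `μ`-rows alone.

In a staircase row every column also grows, so no cell is bosonic. In a `μ`-row every cell is
bosonic, and since the column of `δᵐ` above it has length `m - 1 - j`, the leg in `Λ*` picks up
the arm: the factor is `1 - (qt)^a t^(l+1)`. In a `λ`-row the bosonic cells are the columns `j`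
that are not parts of `λ + δᵐ`; by the Maya-diagram duality these are exactly `j = m + c - λ'_c`
for the cells `(i, c)` of `λ`, and the hook becomes `q^a (qt)^(l+1)`. -/

noncomputable section

namespace DoubleMacdonald

/-- A partition, encoded as a weakly decreasing function `ℕ → ℕ` (0-indexed: `f 0 = λ₁`)
with finitely many nonzero values. -/
def IsPartition (f : ℕ → ℕ) : Prop :=
  (∀ ⦃i j : ℕ⦄, i ≤ j → f j ≤ f i) ∧ ∃ N, ∀ i, N ≤ i → f i = 0

/-- The size `|λ| = Σᵢ λᵢ` of a partition. -/
def psize (f : ℕ → ℕ) : ℕ := ∑ᶠ i, f i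

/-- The number `ℓ(λ)` of nonzero parts of a partition. -/
def plen (f : ℕ → ℕ) : ℕ := Nat.card {i : ℕ | 1 ≤ f i}

/-- The conjugate partition: `λ'ⱼ = #{i : λᵢ ≥ j}` (0-indexed: `conj f j = λ'_{j+1}`). -/
def conj (f : ℕ → ℕ) : ℕ → ℕ := fun j => Nat.card {i : ℕ | j + 1 ≤ f i}

/-- The staircase partition `δ^m = (m-1, m-2, …, 1, 0)`. -/
def delta (m : ℕ) : ℕ → ℕ := fun i => m - 1 - i

/-- Componentwise sum of partitions. -/
def addF (f g : ℕ → ℕ) : ℕ → ℕ := fun i => f i + g i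

/-- Union `λ ∪ μ` of partitions: the weakly decreasing rearrangement of the combined
multiset of parts, defined via `(λ ∪ μ)' = λ' + μ'`. -/
def unionF (f g : ℕ → ℕ) : ℕ → ℕ := conj (addF (conj f) (conj g))

/-- Partial sum `λ₁ + ⋯ + λ_k`. -/
def psum (f : ℕ → ℕ) (k : ℕ) : ℕ := ∑ i ∈ Finset.range k, f i

/-- The statistic `n(λ) = Σᵢ (i-1) λᵢ`. -/
def nstat (f : ℕ → ℕ) : ℕ := ∑ᶠ i, i * f i

/-- The (extended) dominance order: `f ⪰ g` iff all partial sums of `f` dominate those of `g`. -/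
def Dominates (f g : ℕ → ℕ) : Prop := ∀ k, psum g k ≤ psum f k

open MvPolynomial

/-- The indeterminate `q` in `ℤ[q,t]`. -/
def qp : MvPolynomial (Fin 2) ℤ := X 0

/-- The indeterminate `t` in `ℤ[q,t]`. -/
def tp : MvPolynomial (Fin 2) ℤ := X 1

/-- A cell `(i,j)` (0-indexed) of `Λ*` is bosonic for the pair `(Λ*, Λ⊛)` if it is NOT
the case that both `Λ⊛ᵢ = Λ*ᵢ + 1` and `(Λ⊛)'ⱼ = (Λ*)'ⱼ + 1`. -/
def Bosonic (L Ls : ℕ → ℕ) (i j : ℕ) : Prop :=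
  ¬(Ls i = L i + 1 ∧ conj Ls j = conj L j + 1)

instance (L Ls : ℕ → ℕ) (i j : ℕ) : Decidable (Bosonic L Ls i j) := by
  unfold Bosonic; infer_instance

/-- The hook product `h↓_Λ(q,t) = ∏_{s ∈ BΛ} (1 − q^{a_{Λ⊛}(s)} t^{l_{Λ*}(s)+1})`
over the bosonic cells of `Λ*`, as an element of `ℤ[q,t]`.
In 0-indexed coordinates, for a cell `(i,j)` of `Λ*` the arm in `Λ⊛` is `Λ⊛ᵢ − (j+1)`
and the leg in `Λ*` plus 1 is `(Λ*)'ⱼ − i`. -/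
def hdown (L Ls : ℕ → ℕ) : MvPolynomial (Fin 2) ℤ :=
  ∏ i ∈ Finset.range (plen L), ∏ j ∈ Finset.range (L i),
    if Bosonic L Ls i j then (1 - qp ^ (Ls i - (j + 1)) * tp ^ (conj L j - i)) else 1

/-- The hook product `c_ν(a,b) = ∏_{s ∈ ν} (1 − a^{arm(s)} b^{leg(s)+1})` for a partition `ν`,
with `a, b` each a monomial in `q, t`. -/
def cprod (a b : MvPolynomial (Fin 2) ℤ) (f : ℕ → ℕ) : MvPolynomial (Fin 2) ℤ :=
  ∏ i ∈ Finset.range (plen f), ∏ j ∈ Finset.range (f i),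
    (1 - a ^ (f i - (j + 1)) * b ^ (conj f j - i))

open Finset

variable {f g A B : ℕ → ℕ} {i j k m n c p v : ℕ}

theorem conj_lt_iff (hf : IsPartition f) : i < conj f j ↔ j < f i := by
  obtain ⟨N, hN⟩ := hf.2
  have hex : ∃ n, f n ≤ j := ⟨N, by simp [hN N le_rfl]⟩
  have key : ∀ i, i < Nat.find hex ↔ j < f i := fun i =>
    ⟨fun hi => lt_of_not_ge (Nat.find_min hex hi),
     fun hj => by_contra fun h => (hf.1 (not_lt.1 h)).not_gt (hj.trans_le' (Nat.find_spec hex))⟩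
  have hset : {i | j + 1 ≤ f i} = ↑(range (Nat.find hex)) := by
    ext x
    simp [key x]
  rw [show conj f j = Nat.find hex by
    rw [conj, hset, Nat.card_coe_set_eq, Set.ncard_coe_finset, card_range], key]

theorem conj_le_iff (hf : IsPartition f) : conj f j ≤ i ↔ f i ≤ j := by
  simpa only [not_lt] using (conj_lt_iff hf).not

theorem lt_plen_iff (hf : IsPartition f) : i < plen f ↔ 0 < f i :=
  conj_lt_iff hf

theorem conj_eq_iff (hf : IsPartition f) : conj f j = c ↔ ∀ i, i < c ↔ j < f i :=
  ⟨fun h _ => h ▸ conj_lt_iff hf,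
   fun h => eq_of_forall_lt_iff fun i => (conj_lt_iff hf).trans (h i).symm⟩

theorem isPartition_conj (hf : IsPartition f) : IsPartition (conj f) :=
  ⟨fun _ _ hjj' => (conj_le_iff hf).2 (((conj_le_iff hf).1 le_rfl).trans hjj'), f 0,
    fun _ hj => Nat.le_zero.1 ((conj_le_iff hf).2 hj)⟩

theorem conj_conj (hf : IsPartition f) : conj (conj f) = f :=
  funext fun _ => eq_of_forall_lt_iff fun _ =>
    (conj_lt_iff (isPartition_conj hf)).trans (conj_lt_iff hf)

theorem isPartition_addF (hf : IsPartition f) (hg : IsPartition g) : IsPartition (addF f g) := by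
  obtain ⟨N, hN⟩ := hf.2
  obtain ⟨M, hM⟩ := hg.2
  exact ⟨fun i j hij => Nat.add_le_add (hf.1 hij) (hg.1 hij),
    max N M, fun i hi => by simp [addF, hN i (le_of_max_le_left hi), hM i (le_of_max_le_right hi)]⟩

theorem isPartition_delta (m : ℕ) : IsPartition (delta m) :=
  ⟨fun _ _ hij => Nat.sub_le_sub_left hij _, m, fun i hi => by simp only [delta]; omega⟩

@[simp]
theorem addF_delta_apply : addF f (delta n) i = f i + (n - 1 - i) := rfl

theorem sum_range_le_psize (hf : IsPartition f) (k : ℕ) : ∑ i ∈ range k, f i ≤ psize f := by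
  obtain ⟨N, hN⟩ := hf.2
  have hsupp : Function.support f ⊆ ↑(range (max k N)) := fun i hi => by
    by_contra h
    simp only [coe_range, Set.mem_Iio, not_lt] at h
    exact hi (hN i (le_of_max_le_right h))
  rw [psize, finsum_eq_sum_of_support_subset f hsupp]
  exact sum_le_sum_of_subset (range_subset_range.2 (le_max_left k N))

theorem le_psize (hf : IsPartition f) (i : ℕ) : f i ≤ psize f :=
  (single_le_sum (fun _ _ => Nat.zero_le _) (self_mem_range_succ i)).trans
    (sum_range_le_psize hf _)

theorem plen_le_psize (hf : IsPartition f) : plen f ≤ psize f :=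
  calc plen f = ∑ _i ∈ range (plen f), 1 := by simp
    _ ≤ ∑ i ∈ range (plen f), f i := sum_le_sum fun i hi => (lt_plen_iff hf).1 (mem_range.1 hi)
    _ ≤ psize f := sum_range_le_psize hf _

theorem isPartition_unionF (hA : IsPartition A) (hg : IsPartition g) :
    IsPartition (unionF A g) :=
  isPartition_conj (isPartition_addF (isPartition_conj hA) (isPartition_conj hg))

theorem conj_unionF (hA : IsPartition A) (hg : IsPartition g) :
    conj (unionF A g) = addF (conj A) (conj g) :=
  conj_conj (isPartition_addF (isPartition_conj hA) (isPartition_conj hg))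

theorem add_conj_unionF_apply_le (hA : IsPartition A) (hg : IsPartition g) :
    conj A (unionF A g k) + conj g (unionF A g k) ≤ k := by
  simpa [conj_unionF hA hg, addF] using (conj_le_iff (isPartition_unionF hA hg)).2 le_rfl

theorem lt_add_conj_unionF_apply_pred (hA : IsPartition A) (hg : IsPartition g)
    (hk : 0 < unionF A g k) :
    k < conj A (unionF A g k - 1) + conj g (unionF A g k - 1) := by
  simpa [conj_unionF hA hg, addF] using
    (conj_lt_iff (isPartition_unionF hA hg)).2 (Nat.sub_lt hk one_pos)

theorem unionF_eq_of_lt_of_le (hA : IsPartition A) (hg : IsPartition g) (hv : 0 < v)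
    (hlt : k < conj A (v - 1) + conj g (v - 1)) (hle : conj A v + conj g v ≤ k) :
    unionF A g k = v := by
  have hW := isPartition_addF (isPartition_conj hA) (isPartition_conj hg)
  refine (conj_eq_iff hW).2 fun j => ⟨fun hj => hlt.trans_le (hW.1 (by omega)), fun hj => ?_⟩
  by_contra h
  exact (hle.trans_lt hj).not_ge (hW.1 (not_lt.1 h))

theorem unionF_apply_of_le (hA : IsPartition A) (hg : IsPartition g) (hi : 0 < A i)
    (h : g 0 ≤ A i) : unionF A g i = A i := by
  refine unionF_eq_of_lt_of_le hA hg hi ?_ ?_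
  · exact Nat.lt_add_right _ ((conj_lt_iff hA).2 (Nat.sub_lt hi one_pos))
  · rw [(conj_le_iff hg (i := 0)).2 h |> Nat.le_zero.1, add_zero]
    exact (conj_le_iff hA).2 le_rfl

theorem bosonic_unionF_iff (hA : IsPartition A) (hB : IsPartition B) (hg : IsPartition g) :
    Bosonic (unionF A g) (unionF B g) i j ↔
      ¬(unionF B g i = unionF A g i + 1 ∧ conj B j = conj A j + 1) := by
  simp only [Bosonic, conj_unionF hA hg, conj_unionF hB hg, addF, add_right_comm _ (conj g j),
    Nat.add_right_cancel_iff]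

theorem eq_zero_of_plen_le (hf : IsPartition f) (h : plen f ≤ i) : f i = 0 :=
  Nat.eq_zero_of_not_pos fun hi => h.not_gt ((lt_plen_iff hf).2 hi)

theorem conj_le_plen (hf : IsPartition f) : conj f j ≤ plen f :=
  (isPartition_conj hf).1 (Nat.zero_le j)

theorem conj_addF_delta_of_lt (hf : IsPartition f) (h : plen f + j < n) :
    conj (addF f (delta n)) j = n - 1 - j := by
  refine (conj_eq_iff (isPartition_addF hf (isPartition_delta n))).2 fun i => ?_
  rcases lt_or_ge i (plen f) with hi | hi
  · have := (lt_plen_iff hf).1 hi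
    simp only [addF_delta_apply]
    omega
  · simp only [addF_delta_apply, eq_zero_of_plen_le hf hi]
    omega

theorem conj_addF_delta_le_plen (hf : IsPartition f) (h : n ≤ plen f + j) :
    conj (addF f (delta n)) j ≤ plen f := by
  refine (conj_le_iff (isPartition_addF hf (isPartition_delta n))).2 ?_
  simp only [addF_delta_apply, eq_zero_of_plen_le hf le_rfl]
  omega

theorem conj_addF_delta_le_succ (hf : IsPartition f) :
    conj (addF f (delta n)) j ≤ conj (addF f (delta (n + 1))) j := by
  have hB := isPartition_addF hf (isPartition_delta (n + 1))
  refine (conj_le_iff (isPartition_addF hf (isPartition_delta n))).2 ?_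
  have := (conj_le_iff hB).1 (le_refl (conj (addF f (delta (n + 1))) j))
  simp only [addF_delta_apply] at this ⊢
  omega

theorem conj_addF_delta_succ_le (hf : IsPartition f) :
    conj (addF f (delta (n + 1))) j ≤ conj (addF f (delta n)) j + 1 := by
  set d := conj (addF f (delta n)) j
  refine (conj_le_iff (isPartition_addF hf (isPartition_delta (n + 1)))).2 ?_
  have hd : addF f (delta n) d ≤ j :=
    (conj_le_iff (isPartition_addF hf (isPartition_delta n))).1 le_rfl
  have := hf.1 (Nat.le_add_right d 1)
  rw [addF_delta_apply] at hd ⊢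
  omega

/-- Maya-diagram duality: the numbers `n + c - f'_c` are the gaps of the beta-set
`{fᵢ + n - 1 - i}`, i.e. the columns in which `f + δⁿ` and `f + δⁿ⁺¹` have the same length. -/
theorem conj_addF_delta_eq_conj (hf : IsPartition f) (hn : plen f ≤ n) {x : ℕ}
    (h1 : n + c ≤ x + conj f c + 1) (h2 : x + conj f c ≤ n + c) :
    conj (addF f (delta n)) x = conj f c := by
  refine (conj_eq_iff (isPartition_addF hf (isPartition_delta n))).2 fun i => ?_
  have := conj_le_plen hf (j := c)
  have := (lt_or_ge i (plen f)).imp_right (eq_zero_of_plen_le hf)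
  rw [conj_lt_iff hf, addF_delta_apply]
  rcases lt_or_ge c (f i) with hc | hc
  · have := (conj_lt_iff hf).2 hc
    omega
  · have := (conj_le_iff hf).2 hc
    omega

theorem conj_eq_conj_addF_delta_of_succ_le (hf : IsPartition f) (hn : plen f ≤ n)
    (h : conj (addF f (delta (n + 1))) j ≤ conj (addF f (delta n)) j) :
    n ≤ j + conj (addF f (delta n)) j ∧
      conj f (j + conj (addF f (delta n)) j - n) = conj (addF f (delta n)) j := by
  have hA := isPartition_addF hf (isPartition_delta n)
  set d := conj (addF f (delta n)) j
  have hd : addF f (delta (n + 1)) d ≤ j :=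
    (conj_le_iff (isPartition_addF hf (isPartition_delta (n + 1)))).1 h
  have hdn : d ≤ n := (conj_le_iff hA).2 (by simp [eq_zero_of_plen_le hf hn])
  simp only [addF_delta_apply] at hd
  refine ⟨by omega, (conj_eq_iff hf).2 fun i => ⟨fun hi => ?_, fun hi => ?_⟩⟩
  · have hd' : j < addF f (delta n) (d - 1) := (conj_lt_iff hA).1 (by omega)
    have := hf.1 (Nat.le_sub_one_of_lt hi)
    rw [addF_delta_apply] at hd'
    omega
  · by_contra hid
    have := hf.1 (not_lt.1 hid)
    omega

theorem strictMono_sub_add (hg : IsPartition g) (h : g 0 ≤ m) : StrictMono fun p => m - g p + p :=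
  strictMono_nat_of_lt_succ fun p => by
    have := hg.1 (Nat.le_add_right p 1)
    have := hg.1 (Nat.zero_le p)
    omega

def hdownRow (L Ls : ℕ → ℕ) (i : ℕ) : MvPolynomial (Fin 2) ℤ :=
  ∏ j ∈ range (L i),
    if Bosonic L Ls i j then (1 - qp ^ (Ls i - (j + 1)) * tp ^ (conj L j - i)) else 1

def cprodRow (a b : MvPolynomial (Fin 2) ℤ) (f : ℕ → ℕ) (i : ℕ) : MvPolynomial (Fin 2) ℤ :=
  ∏ j ∈ range (f i), (1 - a ^ (f i - (j + 1)) * b ^ (conj f j - i))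

theorem hdown_eq_prod_hdownRow (L Ls : ℕ → ℕ) :
    hdown L Ls = ∏ i ∈ range (plen L), hdownRow L Ls i := rfl

theorem cprod_eq_prod_cprodRow (a b : MvPolynomial (Fin 2) ℤ) (f : ℕ → ℕ) :
    cprod a b f = ∏ i ∈ range (plen f), cprodRow a b f i := rfl

theorem unionF_addF_delta_of_lt_plen (hf : IsPartition f) (hg : IsPartition g)
    (hm : psize f + psize g ≤ m) (hi : i < plen f) :
    unionF (addF f (delta m)) g i = f i + (m - 1 - i) := by
  have := (lt_plen_iff hf).1 hi
  have := le_psize hg 0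
  have := plen_le_psize hf
  exact unionF_apply_of_le (isPartition_addF hf (isPartition_delta m)) hg
    (by simp only [addF_delta_apply]; omega) (by simp only [addF_delta_apply]; omega)

theorem unionF_addF_delta_of_lt_plen_succ (hf : IsPartition f) (hg : IsPartition g)
    (hm : psize f + psize g ≤ m) (hi : i < plen f) :
    unionF (addF f (delta (m + 1))) g i = f i + (m - i) :=
  unionF_addF_delta_of_lt_plen hf hg (hm.trans (Nat.le_succ m)) hi

theorem unionF_addF_delta_sub_add (hf : IsPartition f) (hg : IsPartition g)
    (hm : psize f + psize g ≤ m) (hp : p < plen g) :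
    unionF (addF f (delta m)) g (m - g p + p) = g p ∧
      unionF (addF f (delta (m + 1))) g (m - g p + p) = g p := by
  have hA := isPartition_addF hf (isPartition_delta m)
  have hgp := (lt_plen_iff hg).1 hp
  have := le_psize hg p
  have := plen_le_psize hf
  have := (conj_lt_iff hg).2 (Nat.sub_lt hgp one_pos : g p - 1 < g p)
  have := (conj_le_iff hg).2 (le_refl (g p))
  have := conj_addF_delta_of_lt hf (n := m) (j := g p - 1) (by omega)
  have := conj_addF_delta_of_lt hf (n := m + 1) (j := g p - 1) (by omega)
  have := conj_addF_delta_of_lt hf (n := m + 1) (j := g p) (by omega)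
  have := (isPartition_conj hA).1 (Nat.sub_le (g p) 1)
  exact ⟨unionF_eq_of_lt_of_le hA hg hgp (by omega) (by omega),
    unionF_eq_of_lt_of_le (isPartition_addF hf (isPartition_delta (m + 1))) hg hgp
      (by omega) (by omega)⟩

theorem bosonic_iff_of_lt_plen (hf : IsPartition f) (hg : IsPartition g)
    (hm : psize f + psize g ≤ m) (hi : i < plen f) :
    Bosonic (unionF (addF f (delta m)) g) (unionF (addF f (delta (m + 1))) g) i j ↔
      conj (addF f (delta (m + 1))) j ≤ conj (addF f (delta m)) j := by
  rw [bosonic_unionF_iff (isPartition_addF hf (isPartition_delta m))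
    (isPartition_addF hf (isPartition_delta (m + 1))) hg,
    unionF_addF_delta_of_lt_plen hf hg hm hi, unionF_addF_delta_of_lt_plen_succ hf hg hm hi]
  have := conj_addF_delta_le_succ hf (n := m) (j := j)
  have := conj_addF_delta_succ_le hf (n := m) (j := j)
  have := plen_le_psize hf
  omega

theorem staircase_row_bounds (hf : IsPartition f) (hg : IsPartition g)
    (hm : psize f + psize g ≤ m) (hk : plen f ≤ k) (hv : 0 < unionF (addF f (delta m)) g k)
    (hmu : ∀ p < plen g, m - g p + p ≠ k) :
    plen f + unionF (addF f (delta m)) g k < m ∧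
      k < m - unionF (addF f (delta m)) g k + conj g (unionF (addF f (delta m)) g k) := by
  have hA := isPartition_addF hf (isPartition_delta m)
  have hL := isPartition_unionF hA hg
  have hle := add_conj_unionF_apply_le hA hg (k := k)
  have hlt := lt_add_conj_unionF_apply_pred hA hg hv
  have := plen_le_psize hf
  have hvm : unionF (addF f (delta m)) g k ≤ m - plen f := by
    refine (conj_le_iff hL).1 ?_
    have := conj_addF_delta_le_plen hf (n := m) (j := m - plen f) (by omega)
    have := (conj_le_iff hg (i := 0)).2 ((le_psize hg 0).trans (by omega) : g 0 ≤ m - plen f)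
    rw [conj_unionF hA hg, addF]
    omega
  generalize unionF (addF f (delta m)) g k = v at *
  have := conj_addF_delta_of_lt hf (n := m) (j := v - 1) (by omega)
  -- otherwise row `k` would hold the part `μₚ = v` with `p = k + v - m`
  have hkv : k < m - v + conj g v := by
    by_contra h
    have : g (k + v - m) ≤ v := (conj_le_iff hg).1 (by omega)
    have : v - 1 < g (k + v - m) := (conj_lt_iff hg).1 (by omega)
    exact hmu (k + v - m) ((lt_plen_iff hg).2 (by omega)) (by omega)
  have hcol : addF f (delta m) (m - v - 1) ≤ v := (conj_le_iff hA).1 (by omega)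
  have := (lt_or_ge (m - v - 1) (plen f)).imp_left (lt_plen_iff hf).1
  rw [addF_delta_apply] at hcol
  omega

theorem not_bosonic_of_staircase_row (hf : IsPartition f) (hg : IsPartition g)
    (hm : psize f + psize g ≤ m) (hk : plen f ≤ k) (hv : 0 < unionF (addF f (delta m)) g k)
    (hmu : ∀ p < plen g, m - g p + p ≠ k) (hj : j < unionF (addF f (delta m)) g k) :
    ¬Bosonic (unionF (addF f (delta m)) g) (unionF (addF f (delta (m + 1))) g) k j := by
  have hA := isPartition_addF hf (isPartition_delta m)
  have hA2 := isPartition_addF hf (isPartition_delta (m + 1))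
  obtain ⟨hvm, hkv⟩ := staircase_row_bounds hf hg hm hk hv hmu
  have hle := add_conj_unionF_apply_le hA hg (k := k)
  set v := unionF (addF f (delta m)) g k
  have hrow : unionF (addF f (delta (m + 1))) g k = v + 1 := by
    have := conj_addF_delta_of_lt hf (n := m) (j := v) (by omega)
    have := conj_addF_delta_of_lt hf (n := m + 1) (j := v) (by omega)
    have := conj_addF_delta_of_lt hf (n := m + 1) (j := v + 1) (by omega)
    have := (isPartition_conj hg).1 (Nat.le_add_right v 1)
    exact unionF_eq_of_lt_of_le hA2 hg (Nat.succ_pos v)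
      (by rw [Nat.add_sub_cancel]; omega) (by omega)
  have := conj_addF_delta_of_lt hf (n := m) (j := j) (by omega)
  have := conj_addF_delta_of_lt hf (n := m + 1) (j := j) (by omega)
  rw [bosonic_unionF_iff hA hA2 hg, not_not]
  exact ⟨hrow, by omega⟩

theorem hdownRow_eq_prod_filter_of_lt_plen (hf : IsPartition f) (hg : IsPartition g)
    (hm : psize f + psize g ≤ m) (hi : i < plen f) :
    hdownRow (unionF (addF f (delta m)) g) (unionF (addF f (delta (m + 1))) g) i =
      ∏ j ∈ (range (f i + (m - 1 - i))).filter
          (fun j => conj (addF f (delta (m + 1))) j ≤ conj (addF f (delta m)) j),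
        (1 - qp ^ (f i + (m - i) - (j + 1)) * tp ^ (conj (addF f (delta m)) j - i)) := by
  have hmf : plen f ≤ m := (plen_le_psize hf).trans (by omega)
  rw [hdownRow, ← prod_filter, unionF_addF_delta_of_lt_plen hf hg hm hi,
    unionF_addF_delta_of_lt_plen_succ hf hg hm hi,
    conj_unionF (isPartition_addF hf (isPartition_delta m)) hg]
  refine prod_congr (filter_congr fun j _ => bosonic_iff_of_lt_plen hf hg hm hi) fun j hj => ?_
  obtain ⟨hmj, hc⟩ := conj_eq_conj_addF_delta_of_succ_le hf hmf (mem_filter.1 hj).2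
  have : conj (addF f (delta m)) j ≤ plen f := hc ▸ conj_le_plen hf
  have := le_psize hg 0
  have := plen_le_psize hf
  rw [addF, Nat.le_zero.1 ((conj_le_iff hg).2 (by omega)), add_zero]

theorem hdownRow_eq_cprodRow_of_lt_plen (hf : IsPartition f) (hg : IsPartition g)
    (hm : psize f + psize g ≤ m) (hi : i < plen f) :
    hdownRow (unionF (addF f (delta m)) g) (unionF (addF f (delta (m + 1))) g) i =
      cprodRow qp (qp * tp) f i := by
  have hmf : plen f ≤ m := (plen_le_psize hf).trans (by omega)
  rw [hdownRow_eq_prod_filter_of_lt_plen hf hg hm hi, cprodRow]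
  refine prod_nbij' (fun j => j + conj (addF f (delta m)) j - m) (fun c => m + c - conj f c)
    (fun j hj => ?_) (fun c hc => ?_) (fun j hj => ?_) (fun c hc => ?_) (fun j hj => ?_)
  · rw [mem_filter, mem_range] at hj
    obtain ⟨-, hc⟩ := conj_eq_conj_addF_delta_of_succ_le hf hmf hj.2
    refine mem_range.2 <| (conj_lt_iff hf).1 ?_
    rw [hc]
    exact (conj_lt_iff (isPartition_addF hf (isPartition_delta m))).2 hj.1
  · rw [mem_range] at hc
    have := (conj_lt_iff hf).2 hc
    have := conj_le_plen hf (j := c)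
    rw [mem_filter, mem_range, conj_addF_delta_eq_conj hf hmf (c := c) (by omega) (by omega),
      conj_addF_delta_eq_conj hf (hmf.trans (Nat.le_succ m)) (c := c) (by omega) (by omega)]
    omega
  · obtain ⟨hmj, hc⟩ := conj_eq_conj_addF_delta_of_succ_le hf hmf (mem_filter.1 hj).2
    simp only [hc]
    omega
  · have := conj_le_plen hf (j := c)
    rw [conj_addF_delta_eq_conj hf hmf (c := c) (by omega) (by omega)]
    omega
  · rw [mem_filter, mem_range] at hj
    obtain ⟨hmj, hc⟩ := conj_eq_conj_addF_delta_of_succ_le hf hmf hj.2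
    have hid := (conj_lt_iff (isPartition_addF hf (isPartition_delta m))).2 hj.1
    rw [← hc] at hid
    have := (conj_lt_iff hf).1 hid
    rw [show f i + (m - i) - (j + 1) = f i - (j + conj (addF f (delta m)) j - m + 1) +
        (conj (addF f (delta m)) j - i) by omega, pow_add, hc, mul_pow, mul_assoc]

theorem hdownRow_sub_add_eq_cprodRow (hf : IsPartition f) (hg : IsPartition g)
    (hm : psize f + psize g ≤ m) (hp : p < plen g) :
    hdownRow (unionF (addF f (delta m)) g) (unionF (addF f (delta (m + 1))) g) (m - g p + p) =
      cprodRow (qp * tp) tp g p := by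
  have hA := isPartition_addF hf (isPartition_delta m)
  obtain ⟨hrow, hrow'⟩ := unionF_addF_delta_sub_add hf hg hm hp
  rw [hdownRow, cprodRow, hrow]
  refine prod_congr rfl fun j hj => ?_
  rw [mem_range] at hj
  have := le_psize hg p
  have := plen_le_psize hf
  have := (conj_lt_iff hg).2 hj
  have := conj_addF_delta_of_lt hf (n := m) (j := j) (by omega)
  rw [if_pos (by rw [bosonic_unionF_iff hA (isPartition_addF hf (isPartition_delta (m + 1))) hg,
      hrow, hrow']; omega), hrow', conj_unionF hA hg, addF,
    show _ - (m - g p + p) = g p - (j + 1) + (conj g j - p) by omega, pow_add, mul_pow]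
  ring

theorem hdownRow_eq_one_of_staircase_row (hf : IsPartition f) (hg : IsPartition g)
    (hm : psize f + psize g ≤ m) (hk : plen f ≤ k) (hv : 0 < unionF (addF f (delta m)) g k)
    (hmu : ∀ p < plen g, m - g p + p ≠ k) :
    hdownRow (unionF (addF f (delta m)) g) (unionF (addF f (delta (m + 1))) g) k = 1 :=
  prod_eq_one fun _ hj =>
    if_neg (not_bosonic_of_staircase_row hf hg hm hk hv hmu (mem_range.1 hj))

theorem range_plen_union_image_subset (hf : IsPartition f) (hg : IsPartition g)
    (hm : psize f + psize g ≤ m) :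
    range (plen f) ∪ (range (plen g)).image (fun p => m - g p + p) ⊆
      range (plen (unionF (addF f (delta m)) g)) := by
  intro k hk
  simp only [mem_union, mem_range, mem_image] at hk
  rw [mem_range, lt_plen_iff (isPartition_unionF (isPartition_addF hf (isPartition_delta m)) hg)]
  rcases hk with hk | ⟨p, hp, rfl⟩
  · rw [unionF_addF_delta_of_lt_plen hf hg hm hk]
    exact Nat.add_pos_left ((lt_plen_iff hf).1 hk) _
  · rw [(unionF_addF_delta_sub_add hf hg hm hp).1]
    exact (lt_plen_iff hg).1 hp

theorem disjoint_range_plen_image (hf : IsPartition f) (hg : IsPartition g)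
    (hm : psize f + psize g ≤ m) :
    Disjoint (range (plen f)) ((range (plen g)).image fun p => m - g p + p) := by
  simp only [disjoint_left, mem_range, mem_image]
  rintro k hk ⟨p, -, rfl⟩
  have := le_psize hg p
  have := plen_le_psize hf
  omega

/-- **Factorization of the hook product `h↓_Λ` in the stable sector** (equation (C.10)).
If `λ`, `μ` are partitions and `m ≥ |λ| + |μ|`, then with `Λ* = (λ + δ^m) ∪ μ` and
`Λ⊛ = (λ + δ^{m+1}) ∪ μ` one has, in `ℤ[q,t]`:
`h↓_Λ(q,t) = c_λ(q,qt) · c_μ(qt,t)`. -/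
theorem hdown_factorization (f g : ℕ → ℕ) (hf : IsPartition f) (hg : IsPartition g)
    (m : ℕ) (hm : psize f + psize g ≤ m) :
    hdown (unionF (addF f (delta m)) g) (unionF (addF f (delta (m+1))) g) =
      cprod qp (qp * tp) f * cprod (qp * tp) tp g := by
  have hL := isPartition_unionF (isPartition_addF hf (isPartition_delta m)) hg
  have hmu : StrictMono fun p => m - g p + p :=
    strictMono_sub_add hg ((le_psize hg 0).trans (by omega))
  rw [hdown_eq_prod_hdownRow, ← prod_subset (range_plen_union_image_subset hf hg hm),
    prod_union (disjoint_range_plen_image hf hg hm), prod_image hmu.injective.injOn,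
    cprod_eq_prod_cprodRow, cprod_eq_prod_cprodRow]
  · exact congr_arg₂ (· * ·)
      (prod_congr rfl fun i hi => hdownRow_eq_cprodRow_of_lt_plen hf hg hm (mem_range.1 hi))
      (prod_congr rfl fun p hp => hdownRow_sub_add_eq_cprodRow hf hg hm (mem_range.1 hp))
  · intro k hk hk'
    simp only [mem_union, mem_range, mem_image, not_or, not_exists, not_and] at hk hk'
    exact hdownRow_eq_one_of_staircase_row hf hg hm (not_lt.1 hk'.1) ((lt_plen_iff hL).1 hk) hk'.2

end DoubleMacdonald
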